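/- arXiv:0906.5436 — 2 statements merged into one kernel-verified Lean document; each statement's English description precedes it below -/
import Mathlib

section
/- For every r ∈ [1,∞) and every integer n ≥ 2, the probability distribution of the arc count A_n := Σ_{i≠j} 1{X_j ∈ N_{T'}^r(X_i)}, where X_1,…,X_n are independent uniform random points in a nondegenerate closed triangle T' ⊂ ℝ², is the same for every choice of nondegenerate triangle T'; in particular it equals the distribution of the corresponding arc count for independent uniform points in the standard equilateral triangle T with vertices (0,0), (1,0), (1/2,√3/2). (Geometry invariance of the relative arc density of the r-factor proximity catch digraph.) -/
open MeasureTheory Real Set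

noncomputable section

/-- The z-component of the cross product of two planar vectors. -/
def cross (u v : ℝ × ℝ) : ℝ := u.1 * v.2 - u.2 * v.1

/-- Barycentric coordinates of `x` with respect to the triangle with
vertices `a`, `b`, `c`. -/
def bary (a b c x : ℝ × ℝ) : Fin 3 → ℝ := fun i =>
  if i = 1 then cross (x - a) (c - a) / cross (b - a) (c - a)
  else if i = 2 then cross (b - a) (x - a) / cross (b - a) (c - a)
  else 1 - cross (x - a) (c - a) / cross (b - a) (c - a)
    - cross (b - a) (x - a) / cross (b - a) (c - a)

/-- The closed triangle with vertices `a`, `b`, `c` (the set of points with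
nonnegative barycentric coordinates). -/
def tri (a b c : ℝ × ℝ) : Set (ℝ × ℝ) := {x | ∀ i : Fin 3, 0 ≤ bary a b c x i}

/-- The least index maximizing the barycentric coordinates of `x`. -/
def jmax (a b c x : ℝ × ℝ) : Fin 3 :=
  if bary a b c x 1 ≤ bary a b c x 0 ∧ bary a b c x 2 ≤ bary a b c x 0 then 0
  else if bary a b c x 2 ≤ bary a b c x 1 then 1 else 2

/-- The `r`-factor proximity region of `x` in the triangle with vertices `a`, `b`, `c`:
`N^r(x) = {z ∈ T : 1 − β_{j(x)}(z) ≤ r (1 − β_{j(x)}(x))}`. -/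
def prox (a b c : ℝ × ℝ) (r : ℝ) (x : ℝ × ℝ) : Set (ℝ × ℝ) :=
  {z | z ∈ tri a b c ∧
    1 - bary a b c z (jmax a b c x) ≤ r * (1 - bary a b c x (jmax a b c x))}

/-- The uniform probability measure on `s ⊆ ℝ²` (normalized Lebesgue measure). -/
def unif (s : Set (ℝ × ℝ)) : Measure (ℝ × ℝ) := (volume s)⁻¹ • volume.restrict s

def y1 : ℝ × ℝ := (0, 0)
def y2 : ℝ × ℝ := (1, 0)
def y3 : ℝ × ℝ := (1 / 2, Real.sqrt 3 / 2)

/-- The standard equilateral triangle. -/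
def T : Set (ℝ × ℝ) := tri y1 y2 y3

/-- The `r`-factor proximity region in the standard triangle. -/
def N (r : ℝ) (x : ℝ × ℝ) : Set (ℝ × ℝ) := prox y1 y2 y3 r x

/-- The null arc probability `μ(r) = P(X₂ ∈ N^r(X₁))` for independent uniform
points in the standard triangle. -/
def mu (r : ℝ) : ℝ := (((unif T).prod (unif T)) {p | p.2 ∈ N r p.1}).toReal

open Classical in
/-- The number of arcs of the data-random proximity catch digraph on the
points `x 0, …, x (n-1)` in the triangle with vertices `a`, `b`, `c`. -/
def arcCount (a b c : ℝ × ℝ) (r : ℝ) {n : ℕ} (x : Fin n → ℝ × ℝ) : ℕ :=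
  ∑ i : Fin n, ∑ j : Fin n, if i ≠ j ∧ x j ∈ prox a b c r (x i) then 1 else 0

/-! Each barycentric coordinate is a ratio of two cross products, and an affine map of the plane
multiplies every cross product of differences by the determinant of its linear part. Hence an
affine bijection `f` preserves barycentric coordinates, so it maps triangles, the index `j(x)`, the
proximity regions, and therefore arc counts, to the corresponding objects for the image triangle.
It also pushes Lebesgue measure to a constant multiple of itself, so it carries the uniform
distribution on a triangle to the uniform distribution on its image. Any nondegenerate triangle
is the affine image of any other, and pushing the product measure forward gives the claim. -/

open scoped ProbabilityTheory

lemma cross_map_eq_det_mul (A : (ℝ × ℝ) →ₗ[ℝ] ℝ × ℝ) (u v : ℝ × ℝ) :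
    cross (A u) (A v) = LinearMap.det A * cross u v := by
  set M := LinearMap.toMatrix (Module.Basis.finTwoProd ℝ) (Module.Basis.finTwoProd ℝ) A
  have hA : A = Matrix.toLin (Module.Basis.finTwoProd ℝ) (Module.Basis.finTwoProd ℝ) M := by
    simp [M]
  rw [hA, Matrix.eta_fin_two M, LinearMap.det_toLin, Matrix.det_fin_two_of]
  simp only [Matrix.toLin_finTwoProd_apply, cross]
  ring

lemma cross_affineMap_sub (f : (ℝ × ℝ) →ᵃ[ℝ] ℝ × ℝ) (p q o : ℝ × ℝ) :
    cross (f p - f o) (f q - f o) = LinearMap.det f.linear * cross (p - o) (q - o) := by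
  simp only [← vsub_eq_sub, ← f.linearMap_vsub, cross_map_eq_det_mul]

section AffineInvariance

variable {f : (ℝ × ℝ) →ᵃ[ℝ] ℝ × ℝ} {a b c : ℝ × ℝ}

lemma bary_affineMap (hf : LinearMap.det f.linear ≠ 0) (x : ℝ × ℝ) :
    bary (f a) (f b) (f c) (f x) = bary a b c x := by
  funext i
  simp only [bary, cross_affineMap_sub, mul_div_mul_left _ _ hf]

lemma jmax_affineMap (hf : LinearMap.det f.linear ≠ 0) (x : ℝ × ℝ) :
    jmax (f a) (f b) (f c) (f x) = jmax a b c x := by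
  simp only [jmax, bary_affineMap hf]

lemma preimage_tri_affineMap (hf : LinearMap.det f.linear ≠ 0) :
    f ⁻¹' tri (f a) (f b) (f c) = tri a b c := by
  ext x
  simp only [tri, Set.mem_preimage, Set.mem_ofPred_eq, bary_affineMap hf]

lemma affineMap_mem_tri_iff (hf : LinearMap.det f.linear ≠ 0) (x : ℝ × ℝ) :
    f x ∈ tri (f a) (f b) (f c) ↔ x ∈ tri a b c := by
  rw [← Set.mem_preimage, preimage_tri_affineMap hf]

lemma affineMap_mem_prox_iff (hf : LinearMap.det f.linear ≠ 0) (r : ℝ) (x z : ℝ × ℝ) :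
    f z ∈ prox (f a) (f b) (f c) r (f x) ↔ z ∈ prox a b c r x := by
  simp only [prox, Set.mem_ofPred_eq, affineMap_mem_tri_iff hf, jmax_affineMap hf,
    bary_affineMap hf]

lemma arcCount_comp_affineMap (hf : LinearMap.det f.linear ≠ 0) (r : ℝ) {n : ℕ}
    (x : Fin n → ℝ × ℝ) :
    arcCount (f a) (f b) (f c) r (f ∘ x) = arcCount a b c r x := by
  classical
  unfold arcCount
  refine Finset.sum_congr rfl fun i _ => Finset.sum_congr rfl fun j _ => ?_
  exact if_congr (and_congr_right fun _ => affineMap_mem_prox_iff hf r _ _) rfl rfl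

end AffineInvariance

-- Cramer's rule; the zero map when `cross u v = 0`.
def linearMapOfPair (u v p q : ℝ × ℝ) : (ℝ × ℝ) →ₗ[ℝ] ℝ × ℝ where
  toFun x := (cross x v / cross u v) • p + (cross u x / cross u v) • q
  map_add' x y := by ext <;> simp only [cross, Prod.fst_add, Prod.snd_add, Prod.smul_fst,
    Prod.smul_snd, smul_eq_mul] <;> ring
  map_smul' t x := by ext <;> simp only [cross, Prod.smul_fst, Prod.smul_snd, Prod.fst_add,
    Prod.snd_add, smul_eq_mul, RingHom.id_apply] <;> ring

lemma linearMapOfPair_apply_left {u v : ℝ × ℝ} (h : cross u v ≠ 0) (p q : ℝ × ℝ) :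
    linearMapOfPair u v p q u = p := by
  have : cross u u = 0 := by simp only [cross]; ring
  simp [linearMapOfPair, this, div_self h]

lemma linearMapOfPair_apply_right {u v : ℝ × ℝ} (h : cross u v ≠ 0) (p q : ℝ × ℝ) :
    linearMapOfPair u v p q v = q := by
  have : cross v v = 0 := by simp only [cross]; ring
  simp [linearMapOfPair, this, div_self h]

lemma exists_affineMap_triangle {a' b' c' a b c : ℝ × ℝ} (h' : cross (b' - a') (c' - a') ≠ 0)
    (h : cross (b - a) (c - a) ≠ 0) :
    ∃ f : (ℝ × ℝ) →ᵃ[ℝ] ℝ × ℝ, LinearMap.det f.linear ≠ 0 ∧ f a' = a ∧ f b' = b ∧ f c' = c := by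
  set A := linearMapOfPair (b' - a') (c' - a') (b - a) (c - a)
  let f : (ℝ × ℝ) →ᵃ[ℝ] ℝ × ℝ :=
    ⟨fun x => A (x - a') + a, A, fun x w => by simp only [vadd_eq_add, map_sub, map_add]; abel⟩
  have hb : f b' = b := by
    show A (b' - a') + a = b
    rw [linearMapOfPair_apply_left h', sub_add_cancel]
  have hc : f c' = c := by
    show A (c' - a') + a = c
    rw [linearMapOfPair_apply_right h', sub_add_cancel]
  have ha : f a' = a := by simp [f]
  refine ⟨f, fun hdet => h ?_, ha, hb, hc⟩
  rw [← ha, ← hb, ← hc, cross_affineMap_sub, hdet, zero_mul]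

section AddHaar

variable {E : Type*} [NormedAddCommGroup E] [NormedSpace ℝ E] [MeasurableSpace E] [BorelSpace E]
  [FiniteDimensional ℝ E] (μ : Measure E) [μ.IsAddHaarMeasure]

lemma map_affineMap_addHaar_eq_smul_addHaar {f : E →ᵃ[ℝ] E} (hf : LinearMap.det f.linear ≠ 0) :
    μ.map f = ENNReal.ofReal |(LinearMap.det f.linear)⁻¹| • μ := by
  have hcomp : (f : E → E) = (· + f 0) ∘ f.linear := funext fun x => congrFun f.decomp x
  rw [hcomp, ← Measure.map_map (measurable_add_const _)
      f.linear.continuous_of_finiteDimensional.measurable,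
    Measure.map_linearMap_addHaar_eq_smul_addHaar μ hf, Measure.map_smul, map_add_right_eq_self]

lemma cond_smul {α : Type*} [MeasurableSpace α] (ν : Measure α) (s : Set α) {k : ENNReal}
    (hk0 : k ≠ 0) (hk : k ≠ ⊤) : (k • ν)[|s] = ν[|s] := by
  rw [ProbabilityTheory.cond, ProbabilityTheory.cond, Measure.smul_apply, Measure.restrict_smul,
    smul_smul, smul_eq_mul,
    ENNReal.mul_inv (Or.inl hk0) (Or.inl hk), mul_right_comm, ENNReal.inv_mul_cancel hk0 hk,
    one_mul]

lemma map_cond_preimage {α β : Type*} [MeasurableSpace α] [MeasurableSpace β] (ν : Measure α)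
    {f : α → β} (hf : Measurable f) {t : Set β} (ht : MeasurableSet t) :
    (ν[|f ⁻¹' t]).map f = (ν.map f)[|t] := by
  rw [ProbabilityTheory.cond, ProbabilityTheory.cond, Measure.map_smul,
    ← Measure.restrict_map hf ht, Measure.map_apply hf ht]

lemma measurePreserving_affineMap_cond {f : E →ᵃ[ℝ] E} (hf : LinearMap.det f.linear ≠ 0)
    {t : Set E} (ht : MeasurableSet t) : MeasurePreserving f (μ[|f ⁻¹' t]) (μ[|t]) := by
  have hfm : Measurable f := f.continuous_of_finiteDimensional.measurable
  refine ⟨hfm, ?_⟩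
  rw [map_cond_preimage μ hfm ht, map_affineMap_addHaar_eq_smul_addHaar μ hf,
    cond_smul _ _ _ ENNReal.ofReal_ne_top]
  simpa using hf

end AddHaar

lemma unif_eq_cond (s : Set (ℝ × ℝ)) : unif s = volume[|s] := rfl

instance (s : Set (ℝ × ℝ)) : IsFiniteMeasure (unif s) := by
  rw [unif_eq_cond]
  infer_instance

lemma continuous_bary (a b c : ℝ × ℝ) (i : Fin 3) : Continuous fun x => bary a b c x i := by
  fin_cases i <;>
    simp only [bary, Fin.zero_eta, Fin.mk_one, Fin.reduceFinMk, Fin.isValue, Fin.reduceEq,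
      zero_ne_one, ↓reduceIte, cross, Prod.fst_sub, Prod.snd_sub] <;>
    fun_prop

lemma isClosed_tri (a b c : ℝ × ℝ) : IsClosed (tri a b c) := by
  simp only [tri, Set.ofPred_forall]
  exact isClosed_iInter fun i => isClosed_le continuous_const (continuous_bary a b c i)

lemma measurable_jmax (a b c : ℝ × ℝ) : Measurable (jmax a b c) := by
  have hle (i j : Fin 3) : MeasurableSet {x | bary a b c x i ≤ bary a b c x j} :=
    measurableSet_le (continuous_bary a b c i).measurable (continuous_bary a b c j).measurable
  exact Measurable.ite ((hle 1 0).inter (hle 2 0)) measurable_const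
    (Measurable.ite (hle 2 1) measurable_const measurable_const)

lemma measurableSet_mem_prox {α : Type*} [MeasurableSpace α] (a b c : ℝ × ℝ) (r : ℝ)
    {g h : α → ℝ × ℝ} (hg : Measurable g) (hh : Measurable h) :
    MeasurableSet {x | g x ∈ prox a b c r (h x)} := by
  have hbary : Measurable fun q : (ℝ × ℝ) × Fin 3 => bary a b c q.1 q.2 :=
    measurable_from_prod_countable_left fun i => (continuous_bary a b c i).measurable
  have hj : Measurable fun x => jmax a b c (h x) := (measurable_jmax a b c).comp hh
  exact ((isClosed_tri a b c).measurableSet.preimage hg).inter <| measurableSet_le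
    (measurable_const.sub (hbary.comp (hg.prodMk hj)))
    (measurable_const.mul (measurable_const.sub (hbary.comp (hh.prodMk hj))))

lemma measurable_arcCount (a b c : ℝ × ℝ) (r : ℝ) (n : ℕ) :
    Measurable (arcCount a b c r (n := n)) := by
  classical
  unfold arcCount
  refine Finset.measurable_sum _ fun i _ => Finset.measurable_sum _ fun j _ => ?_
  have harc : MeasurableSet {x : Fin n → ℝ × ℝ | i ≠ j ∧ x j ∈ prox a b c r (x i)} :=
    (MeasurableSet.const (i ≠ j)).inter
      (measurableSet_mem_prox a b c r (measurable_pi_apply j) (measurable_pi_apply i))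
  exact Measurable.ite harc measurable_const measurable_const

theorem map_arcCount_pi_unif_affineMap {f : (ℝ × ℝ) →ᵃ[ℝ] ℝ × ℝ}
    (hf : LinearMap.det f.linear ≠ 0) (a b c : ℝ × ℝ) (r : ℝ) (n : ℕ) :
    Measure.map (arcCount (f a) (f b) (f c) r)
        (Measure.pi fun _ : Fin n => unif (tri (f a) (f b) (f c))) =
      Measure.map (arcCount a b c r) (Measure.pi fun _ : Fin n => unif (tri a b c)) := by
  have hunif : MeasurePreserving f (unif (tri a b c)) (unif (tri (f a) (f b) (f c))) := by
    rw [← preimage_tri_affineMap hf]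
    exact measurePreserving_affineMap_cond volume hf (isClosed_tri _ _ _).measurableSet
  have hpi := measurePreserving_pi _ _ fun _ : Fin n => hunif
  rw [← hpi.map_eq, Measure.map_map (measurable_arcCount _ _ _ r n) hpi.measurable]
  exact congrArg (Measure.map · _) (funext (arcCount_comp_affineMap hf r))

theorem map_arcCount_pi_unif_eq {a' b' c' a b c : ℝ × ℝ} (h' : cross (b' - a') (c' - a') ≠ 0)
    (h : cross (b - a) (c - a) ≠ 0) (r : ℝ) (n : ℕ) :
    Measure.map (arcCount a b c r) (Measure.pi fun _ : Fin n => unif (tri a b c)) =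
      Measure.map (arcCount a' b' c' r) (Measure.pi fun _ : Fin n => unif (tri a' b' c')) := by
  obtain ⟨f, hf, rfl, rfl, rfl⟩ := exists_affineMap_triangle h' h
  exact map_arcCount_pi_unif_affineMap hf a' b' c' r n

lemma cross_standard_ne_zero : cross (y2 - y1) (y3 - y1) ≠ 0 := by
  norm_num [cross, y1, y2, y3]

theorem geometry_invariance_general (r : ℝ) (n : ℕ)
    (a b c : ℝ × ℝ) (hnd : cross (b - a) (c - a) ≠ 0) :
    Measure.map (arcCount a b c r) (Measure.pi fun _ : Fin n => unif (tri a b c)) =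
      Measure.map (arcCount y1 y2 y3 r) (Measure.pi fun _ : Fin n => unif T) :=
  map_arcCount_pi_unif_eq cross_standard_ne_zero hnd r n

/-- Geometry invariance: for `n ≥ 2` iid uniform points in any nondegenerate
triangle, the distribution of the arc count of the `r`-factor proximity catch
digraph does not depend on the triangle; it equals the one for the standard
equilateral triangle. -/
theorem geometry_invariance (r : ℝ) (hr : 1 ≤ r) (n : ℕ) (hn : 2 ≤ n)
    (a b c : ℝ × ℝ) (hnd : cross (b - a) (c - a) ≠ 0) :
    Measure.map (arcCount a b c r) (Measure.pi fun _ : Fin n => unif (tri a b c)) =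
      Measure.map (arcCount y1 y2 y3 r) (Measure.pi fun _ : Fin n => unif T) :=
  geometry_invariance_general r n a b c hnd
end
end

section
/- For the association alternative with ε = √3/12, the arc probability μ_A(r, √3/12) := P(X₂ ∈ N^r(X₁)), for X₁, X₂ independent uniform on T(y₁,√3/4) ∪ T(y₂,√3/4) ∪ T(y₃,√3/4), satisfies: μ_A(r,√3/12) = (6r⁴ − 16r³ + 18r² − 5)/(18r²) for r ∈ [1, 2), and μ_A(r,√3/12) = 1 − (37/18)r⁻² for r ∈ [2, ∞). -/
open MeasureTheory Real Set

noncomputable section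

/-- The corner triangle at vertex `y₁`. -/
def corner1 (e : ℝ) : Set (ℝ × ℝ) := {p ∈ T | (Real.sqrt 3 * p.1 + p.2) / 2 ≤ e}

/-- The corner triangle at vertex `y₂`. -/
def corner2 (e : ℝ) : Set (ℝ × ℝ) := {p ∈ T | (Real.sqrt 3 * (1 - p.1) + p.2) / 2 ≤ e}

/-- The corner triangle at vertex `y₃`. -/
def corner3 (e : ℝ) : Set (ℝ × ℝ) := {p ∈ T | Real.sqrt 3 / 2 - p.2 ≤ e}

/-- The support of the segregation alternative `H^S_ε`. -/
def Tseg (e : ℝ) : Set (ℝ × ℝ) := T \ (corner1 e ∪ corner2 e ∪ corner3 e)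

/-- The support of the association alternative `H^A_ε`. -/
def Tass (e : ℝ) : Set (ℝ × ℝ) :=
  corner1 (Real.sqrt 3 / 3 - e) ∪ corner2 (Real.sqrt 3 / 3 - e) ∪
    corner3 (Real.sqrt 3 / 3 - e)

/-- The arc probability under the association alternative. -/
def muA (r e : ℝ) : ℝ :=
  (((unif (Tass e)).prod (unif (Tass e))) {p | p.2 ∈ N r p.1}).toReal

open scoped ENNReal

/-!
The linear map `toSimplex`, `x ↦ (β₂(x), β₃(x))`, scales area by `2/√3` and carries the support
of `H^A_{√3/12}` onto the union of the three corners `{β_i ≥ 1/2}` of the standard simplex, which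
meet only in points. On corner `i` the coordinate `β_i` is the largest, so there
`N^r(x) ∩ support` is the sublevel set `{1 - β_i ≤ r (1 - β_i(x))}` of the support; its area
`sublevelArea (r (1 - β_i(x)))` is a sum of three right-triangle areas. The cyclic rotation of the
simplex preserves area and permutes the corners, so all three corners contribute equally, and
integrating over a corner along the level lines of `β_i` leaves
`μ_A = (64/3) ∫₀^{1/2} t · sublevelArea (r t) dt`, an integral of a piecewise cubic with
breakpoints `1/(2r)` and `1/r`.
-/

lemma Fin.apply_eq_apply_zero_of_add_one {n : ℕ} {α : Type*} {f : Fin (n + 1) → α}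
    (hf : ∀ i, f (i + 1) = f i) (i : Fin (n + 1)) : f i = f 0 := by
  induction i using Fin.induction with
  | zero => rfl
  | succ i ih => rw [← Fin.coeSucc_eq_succ, hf, ih]

namespace ArcProbability

section PlaneLinearMap

variable (a b c d : ℝ)

def planeLinearMap : (ℝ × ℝ) →ₗ[ℝ] ℝ × ℝ :=
  Matrix.toLin (Module.Basis.finTwoProd ℝ) (Module.Basis.finTwoProd ℝ) !![a, b; c, d]

lemma planeLinearMap_apply (x : ℝ × ℝ) :
    planeLinearMap a b c d x = (a * x.1 + b * x.2, c * x.1 + d * x.2) :=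
  Matrix.toLin_finTwoProd_apply a b c d x

lemma det_planeLinearMap : LinearMap.det (planeLinearMap a b c d) = a * d - b * c := by
  rw [planeLinearMap, LinearMap.det_toLin, Matrix.det_fin_two_of]

lemma measurable_planeLinearMap : Measurable (planeLinearMap a b c d) :=
  (planeLinearMap a b c d).continuous_of_finiteDimensional.measurable

variable {a b c d}

lemma map_planeLinearMap_volume (h : a * d - b * c ≠ 0) :
    Measure.map (planeLinearMap a b c d) volume
      = ENNReal.ofReal |(a * d - b * c)⁻¹| • volume := by
  rw [Measure.map_linearMap_addHaar_eq_smul_addHaar volume (by rwa [det_planeLinearMap]),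
    det_planeLinearMap]

lemma volume_preimage_planeLinearMap (h : a * d - b * c ≠ 0) (s : Set (ℝ × ℝ)) :
    volume (planeLinearMap a b c d ⁻¹' s) = ENNReal.ofReal |(a * d - b * c)⁻¹| * volume s := by
  rw [Measure.addHaar_preimage_linearMap volume (by rwa [det_planeLinearMap]),
    det_planeLinearMap]

lemma setLIntegral_comp_planeLinearMap (h : a * d - b * c ≠ 0) {g : ℝ × ℝ → ℝ≥0∞}
    (hg : Measurable g) {s : Set (ℝ × ℝ)} (hs : MeasurableSet s) :
    ∫⁻ x in planeLinearMap a b c d ⁻¹' s, g (planeLinearMap a b c d x)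
      = ENNReal.ofReal |(a * d - b * c)⁻¹| * ∫⁻ y in s, g y := by
  rw [← setLIntegral_map hs hg (measurable_planeLinearMap a b c d),
    map_planeLinearMap_volume h, Measure.restrict_smul, lintegral_smul_measure, smul_eq_mul]

lemma measurePreserving_planeLinearMap_add (h : |a * d - b * c| = 1) (v : ℝ × ℝ) :
    MeasurePreserving (fun x => planeLinearMap a b c d x + v) := by
  have hdet : a * d - b * c ≠ 0 := fun h0 => by simp [h0] at h
  refine (measurePreserving_add_right volume v).comp ⟨measurable_planeLinearMap a b c d, ?_⟩
  rw [map_planeLinearMap_volume hdet, abs_inv, h, inv_one, ENNReal.ofReal_one, one_smul]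

end PlaneLinearMap

lemma setLIntegral_Icc_ofReal {a b : ℝ} (hab : a ≤ b) {f : ℝ → ℝ} (hf : Continuous f)
    (hf0 : ∀ t ∈ Icc a b, 0 ≤ f t) :
    ∫⁻ t in Icc a b, ENNReal.ofReal (f t) = ENNReal.ofReal (∫ t in a..b, f t) := by
  rw [intervalIntegral.integral_of_le hab, ← integral_Icc_eq_integral_Ioc,
    ofReal_integral_eq_lintegral_ofReal hf.integrableOn_Icc
      ((ae_restrict_iff' measurableSet_Icc).2 (ae_of_all _ hf0))]

def rightTriangle (a b c : ℝ) : Set (ℝ × ℝ) := {p | a ≤ p.1 ∧ b ≤ p.2 ∧ p.1 + p.2 ≤ c}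

lemma measurableSet_rightTriangle (a b c : ℝ) : MeasurableSet (rightTriangle a b c) :=
  (measurableSet_le measurable_const measurable_fst).inter
    ((measurableSet_le measurable_const measurable_snd).inter
      (measurableSet_le (measurable_fst.add measurable_snd) measurable_const))

/-- The substitution `p = (t - v, v)` turns the triangle into `{0 ≤ v ≤ t ≤ c}`. -/
lemma setLIntegral_rightTriangle_comp_add (c : ℝ) {g : ℝ → ℝ≥0∞} (hg : Measurable g) :
    ∫⁻ p in rightTriangle 0 0 c, g (p.1 + p.2)
      = ∫⁻ t in Icc 0 c, ENNReal.ofReal t * g t := by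
  set S : Set (ℝ × ℝ) := {q | q.1 ∈ Icc 0 c} ∩ {q | q.2 ∈ Icc 0 q.1}
  have hS : MeasurableSet S :=
    (measurable_fst measurableSet_Icc).inter
      ((measurableSet_le measurable_const measurable_snd).inter
        (measurableSet_le measurable_snd measurable_fst))
  have hpre : planeLinearMap 1 (-1) 0 1 ⁻¹' rightTriangle 0 0 c = S := by
    ext q
    simp only [S, rightTriangle, mem_preimage, planeLinearMap_apply, mem_ofPred_eq,
      mem_inter_iff, mem_Icc]
    constructor
    · rintro ⟨h1, h2, h3⟩; exact ⟨⟨by linarith, by linarith⟩, by linarith, by linarith⟩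
    · rintro ⟨⟨h1, h2⟩, h3, h4⟩; exact ⟨by linarith, by linarith, by linarith⟩
  have hsubst : ∫⁻ q in S, g q.1 = ∫⁻ p in rightTriangle 0 0 c, g (p.1 + p.2) := by
    simpa [hpre, planeLinearMap_apply] using setLIntegral_comp_planeLinearMap (a := 1) (b := -1)
      (c := 0) (d := 1) (by norm_num) (hg.comp (measurable_fst.add measurable_snd))
      (measurableSet_rightTriangle 0 0 c)
  rw [← hsubst, ← lintegral_indicator hS, Measure.volume_eq_prod,
    lintegral_prod _ ((hg.comp measurable_fst).indicator hS (f := fun q => g q.1)).aemeasurable,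
    ← lintegral_indicator measurableSet_Icc]
  congr 1 with x
  by_cases hx : x ∈ Icc 0 c
  · have hsection : ∀ y, S.indicator (fun q => g q.1) (x, y)
        = (Icc 0 x).indicator (fun _ => g x) y :=
      fun y => by simp only [S, indicator, mem_inter_iff, mem_ofPred_eq, hx, true_and]
    simp only [hsection, lintegral_indicator_const measurableSet_Icc, Real.volume_Icc, sub_zero,
      indicator_of_mem hx, mul_comm]
  · simp only [S, indicator, mem_inter_iff, mem_ofPred_eq, hx, false_and, if_false,
      lintegral_zero]

lemma volume_rightTriangle (a b c : ℝ) :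
    volume (rightTriangle a b c) = ENNReal.ofReal (max (c - a - b) 0 ^ 2 / 2) := by
  have htranslate : rightTriangle a b c = (· + (-a, -b)) ⁻¹' rightTriangle 0 0 (c - a - b) := by
    ext p
    simp only [rightTriangle, mem_preimage, mem_ofPred_eq, Prod.fst_add, Prod.snd_add]
    constructor <;> rintro ⟨h1, h2, h3⟩ <;> exact ⟨by linarith, by linarith, by linarith⟩
  have harea := setLIntegral_rightTriangle_comp_add (c - a - b) (g := fun _ => 1) measurable_const
  simp only [mul_one, setLIntegral_one] at harea
  rw [htranslate, measure_preimage_add_right, harea]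
  rcases lt_or_ge (c - a - b) 0 with h | h
  · rw [Icc_eq_empty (by linarith), Measure.restrict_empty, lintegral_zero_measure,
      max_eq_right h.le]
    norm_num
  · rw [max_eq_left h, setLIntegral_Icc_ofReal h (f := fun t => t) continuous_id
      (fun t ht => ht.1), integral_id]
    norm_num

def simplexCoord (b : ℝ × ℝ) : Fin 3 → ℝ := ![1 - b.1 - b.2, b.1, b.2]

lemma simplexCoord_zero (b : ℝ × ℝ) : simplexCoord b 0 = 1 - b.1 - b.2 := rfl

lemma simplexCoord_one (b : ℝ × ℝ) : simplexCoord b 1 = b.1 := rfl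

lemma simplexCoord_two (b : ℝ × ℝ) : simplexCoord b 2 = b.2 := rfl

lemma measurable_simplexCoord (i : Fin 3) : Measurable fun b => simplexCoord b i := by
  obtain rfl | rfl | rfl : i = 0 ∨ i = 1 ∨ i = 2 := by omega
  all_goals simp only [simplexCoord_zero, simplexCoord_one, simplexCoord_two]; fun_prop

lemma forall_simplexCoord_nonneg_iff (b : ℝ × ℝ) :
    (∀ j, 0 ≤ simplexCoord b j) ↔ 0 ≤ b.1 ∧ 0 ≤ b.2 ∧ b.1 + b.2 ≤ 1 := by
  refine ⟨fun h => ⟨h 1, h 2, by linarith [h 0, simplexCoord_zero b]⟩, fun ⟨h1, h2, h3⟩ j => ?_⟩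
  obtain rfl | rfl | rfl : j = 0 ∨ j = 1 ∨ j = 2 := by omega
  exacts [by rw [simplexCoord_zero]; linarith, h1, h2]

lemma sum_simplexCoord (b : ℝ × ℝ) : ∑ k, simplexCoord b k = 1 := by
  rw [Fin.sum_univ_three, simplexCoord_zero, simplexCoord_one, simplexCoord_two]
  ring

lemma simplexCoord_add_simplexCoord_le_one {b : ℝ × ℝ} (hb : ∀ k, 0 ≤ simplexCoord b k)
    {i j : Fin 3} (hij : i ≠ j) : simplexCoord b i + simplexCoord b j ≤ 1 := by
  rw [← sum_simplexCoord b, ← Finset.sum_pair hij]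
  exact Finset.sum_le_sum_of_subset_of_nonneg (Finset.subset_univ _) fun k _ _ => hb k

lemma eq_of_simplexCoord_eq {b b' : ℝ × ℝ} {i j : Fin 3} (hij : i ≠ j)
    (hi : simplexCoord b i = simplexCoord b' i) (hj : simplexCoord b j = simplexCoord b' j) :
    b = b' := by
  obtain rfl | rfl | rfl : i = 0 ∨ i = 1 ∨ i = 2 := by omega
  all_goals obtain rfl | rfl | rfl : j = 0 ∨ j = 1 ∨ j = 2 := by omega
  all_goals simp only [simplexCoord_zero, simplexCoord_one, simplexCoord_two] at hi hj
  all_goals first | exact absurd rfl hij | exact Prod.ext (by linarith) (by linarith)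

def simplexCorner (i : Fin 3) : Set (ℝ × ℝ) :=
  {b | (∀ j, 0 ≤ simplexCoord b j) ∧ 1 / 2 ≤ simplexCoord b i}

def simplexCorners : Set (ℝ × ℝ) := ⋃ i, simplexCorner i

def sublevel (i : Fin 3) (s : ℝ) : Set (ℝ × ℝ) := {b | 1 - simplexCoord b i ≤ s}

lemma simplexCorners_subset : simplexCorners ⊆ {b | ∀ j, 0 ≤ simplexCoord b j} :=
  iUnion_subset fun _ _ hb => hb.1

lemma measurableSet_sublevel (i : Fin 3) (s : ℝ) : MeasurableSet (sublevel i s) :=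
  measurableSet_le (measurable_const.sub (measurable_simplexCoord i)) measurable_const

lemma measurableSet_simplexCorner (i : Fin 3) : MeasurableSet (simplexCorner i) := by
  simp only [simplexCorner, ofPred_and, ofPred_forall]
  exact (MeasurableSet.iInter fun j => measurableSet_le measurable_const
    (measurable_simplexCoord j)).inter
      (measurableSet_le measurable_const (measurable_simplexCoord i))

lemma measurableSet_simplexCorners : MeasurableSet simplexCorners :=
  MeasurableSet.iUnion measurableSet_simplexCorner

lemma simplexCoord_eq_of_mem_simplexCorner {b : ℝ × ℝ} {i j : Fin 3} (hb : b ∈ simplexCorner i)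
    (hij : simplexCoord b i ≤ simplexCoord b j) : simplexCoord b j = simplexCoord b i := by
  rcases eq_or_ne i j with rfl | hne
  · rfl
  · linarith [simplexCoord_add_simplexCoord_le_one hb.1 hne, hb.2]

lemma subsingleton_simplexCorner_inter {i j : Fin 3} (hij : i ≠ j) :
    (simplexCorner i ∩ simplexCorner j).Subsingleton := by
  have hhalf : ∀ b ∈ simplexCorner i ∩ simplexCorner j,
      simplexCoord b i = 1 / 2 ∧ simplexCoord b j = 1 / 2 := by
    rintro b ⟨⟨hb, hbi⟩, -, hbj⟩
    have := simplexCoord_add_simplexCoord_le_one hb hij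
    constructor <;> linarith
  intro b hb b' hb'
  exact eq_of_simplexCoord_eq hij ((hhalf b hb).1.trans (hhalf b' hb').1.symm)
    ((hhalf b hb).2.trans (hhalf b' hb').2.symm)

lemma aedisjoint_inter_simplexCorner {i j : Fin 3} (hij : i ≠ j) (s t : Set (ℝ × ℝ)) :
    AEDisjoint volume (s ∩ simplexCorner i) (t ∩ simplexCorner j) :=
  measure_mono_null (fun _ hb => (⟨hb.1.2, hb.2.2⟩ : _ ∈ simplexCorner i ∩ simplexCorner j))
    ((subsingleton_simplexCorner_inter hij).measure_zero volume)

def simplexRotate (b : ℝ × ℝ) : ℝ × ℝ := (b.2, 1 - b.1 - b.2)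

lemma simplexCoord_simplexRotate (b : ℝ × ℝ) (i : Fin 3) :
    simplexCoord (simplexRotate b) i = simplexCoord b (i + 1) := by
  obtain rfl | rfl | rfl : i = 0 ∨ i = 1 ∨ i = 2 := by omega
  all_goals simp only [simplexRotate, simplexCoord_zero, simplexCoord_one, simplexCoord_two,
    Fin.reduceAdd]
  ring

lemma measurePreserving_simplexRotate : MeasurePreserving simplexRotate := by
  have h : simplexRotate = fun b => planeLinearMap 0 1 (-1) (-1) b + (0, 1) := by
    ext b
    · simp only [simplexRotate, planeLinearMap_apply, Prod.fst_add]
      ring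
    · simp only [simplexRotate, planeLinearMap_apply, Prod.snd_add]
      ring
  rw [h]
  exact measurePreserving_planeLinearMap_add (by norm_num) _

lemma preimage_simplexRotate_sublevel (i : Fin 3) (s : ℝ) :
    simplexRotate ⁻¹' sublevel i s = sublevel (i + 1) s := by
  ext b
  simp only [sublevel, mem_preimage, mem_ofPred_eq, simplexCoord_simplexRotate]

lemma preimage_simplexRotate_simplexCorner (i : Fin 3) :
    simplexRotate ⁻¹' simplexCorner i = simplexCorner (i + 1) := by
  ext b
  simp only [simplexCorner, mem_preimage, mem_ofPred_eq, simplexCoord_simplexRotate]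
  refine and_congr_left' ⟨fun h j => ?_, fun h j => h (j + 1)⟩
  simpa using h (j - 1)

lemma preimage_simplexRotate_simplexCorners :
    simplexRotate ⁻¹' simplexCorners = simplexCorners := by
  simp only [simplexCorners, preimage_iUnion, preimage_simplexRotate_simplexCorner]
  exact (Equiv.addRight (1 : Fin 3)).surjective.iUnion_comp simplexCorner

def sublevelArea (s : ℝ) : ℝ := max (min s (1 / 2)) 0 ^ 2 / 2 + max (min s 1 - 1 / 2) 0 ^ 2

lemma sublevelArea_of_le_half {s : ℝ} (h0 : 0 ≤ s) (h : s ≤ 1 / 2) :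
    sublevelArea s = s ^ 2 / 2 := by
  rw [sublevelArea, min_eq_left h, max_eq_left h0, min_eq_left (by linarith),
    max_eq_right (by linarith)]
  ring

lemma sublevelArea_of_half_le_of_le_one {s : ℝ} (h : 1 / 2 ≤ s) (h' : s ≤ 1) :
    sublevelArea s = 1 / 8 + (s - 1 / 2) ^ 2 := by
  rw [sublevelArea, min_eq_right h, min_eq_left h', max_eq_left (by norm_num),
    max_eq_left (by linarith)]
  ring

lemma sublevelArea_of_one_le {s : ℝ} (h : 1 ≤ s) : sublevelArea s = 3 / 8 := by
  rw [sublevelArea, min_eq_right (by linarith), min_eq_right h, max_eq_left (by norm_num),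
    max_eq_left (by norm_num)]
  ring

lemma volume_sublevel_inter_simplexCorners (i : Fin 3) (s : ℝ) :
    volume (sublevel i s ∩ simplexCorners)
      = ENNReal.ofReal (sublevelArea s) := by
  refine Fin.apply_eq_apply_zero_of_add_one
    (f := fun i => volume (sublevel i s ∩ simplexCorners)) (fun i => ?_) i
    |>.trans ?_
  · rw [← measurePreserving_simplexRotate.measure_preimage ((measurableSet_sublevel i s).inter
      measurableSet_simplexCorners).nullMeasurableSet, preimage_inter,
      preimage_simplexRotate_sublevel, preimage_simplexRotate_simplexCorners]
  have hpiece : ∀ j, sublevel 0 s ∩ simplexCorner j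
      = {b | 1 - simplexCoord b 0 ≤ s ∧ 0 ≤ b.1 ∧ 0 ≤ b.2 ∧ b.1 + b.2 ≤ 1 ∧
          1 / 2 ≤ simplexCoord b j} := fun j => by
    ext b
    simp only [sublevel, simplexCorner, mem_inter_iff, mem_ofPred_eq,
      forall_simplexCoord_nonneg_iff, and_assoc]
  have h0 : sublevel 0 s ∩ simplexCorner 0
      = rightTriangle 0 0 (min s (1 / 2)) := by
    rw [hpiece]; ext b
    simp only [rightTriangle, mem_ofPred_eq, simplexCoord_zero, le_min_iff]
    grind
  have h1 : sublevel 0 s ∩ simplexCorner 1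
      = rightTriangle (1 / 2) 0 (min s 1) := by
    rw [hpiece]; ext b
    simp only [rightTriangle, mem_ofPred_eq, simplexCoord_zero, simplexCoord_one, le_min_iff]
    grind
  have h2 : sublevel 0 s ∩ simplexCorner 2
      = rightTriangle 0 (1 / 2) (min s 1) := by
    rw [hpiece]; ext b
    simp only [rightTriangle, mem_ofPred_eq, simplexCoord_zero, simplexCoord_two, le_min_iff]
    grind
  rw [simplexCorners, inter_iUnion,
    measure_iUnion₀ (fun i j hij => aedisjoint_inter_simplexCorner hij _ _)
      (fun j => ((measurableSet_sublevel 0 s).inter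
        (measurableSet_simplexCorner j)).nullMeasurableSet),
    tsum_fintype, Fin.sum_univ_three, h0, h1, h2, volume_rightTriangle, volume_rightTriangle,
    volume_rightTriangle, ← ENNReal.ofReal_add (by positivity) (by positivity),
    ← ENNReal.ofReal_add (by positivity) (by positivity), sublevelArea]
  simp only [sub_zero]
  congr 1
  ring

lemma setLIntegral_simplexCorner (i : Fin 3) {g : ℝ → ℝ≥0∞} (hg : Measurable g) :
    ∫⁻ b in simplexCorner i, g (1 - simplexCoord b i)
      = ∫⁻ t in Icc 0 (1 / 2), ENNReal.ofReal t * g t := by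
  refine Fin.apply_eq_apply_zero_of_add_one
    (f := fun i => ∫⁻ b in simplexCorner i, g (1 - simplexCoord b i)) (fun i => ?_) i |>.trans ?_
  · simpa only [preimage_simplexRotate_simplexCorner, simplexCoord_simplexRotate] using
      measurePreserving_simplexRotate.setLIntegral_comp_preimage (measurableSet_simplexCorner i)
        (f := fun b => g (1 - simplexCoord b i))
        (hg.comp (measurable_const.sub (measurable_simplexCoord i)))
  have h0 : simplexCorner 0 = rightTriangle 0 0 (1 / 2) := by
    ext b
    simp only [simplexCorner, rightTriangle, mem_ofPred_eq, forall_simplexCoord_nonneg_iff,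
      simplexCoord_zero]
    grind
  simp only [h0, simplexCoord_zero, sub_sub, _root_.sub_sub_cancel]
  exact setLIntegral_rightTriangle_comp_add _ hg

def toSimplex : (ℝ × ℝ) →ₗ[ℝ] ℝ × ℝ := planeLinearMap 1 (-(√3)⁻¹) 0 (2 * (√3)⁻¹)

lemma toSimplex_apply (x : ℝ × ℝ) : toSimplex x = (x.1 - x.2 / √3, 2 * x.2 / √3) := by
  simp only [toSimplex, planeLinearMap_apply]
  ext <;> ring

lemma bary_eq_simplexCoord (x : ℝ × ℝ) (i : Fin 3) :
    bary y1 y2 y3 x i = simplexCoord (toSimplex x) i := by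
  have h3 : √3 ≠ 0 := by positivity
  obtain rfl | rfl | rfl : i = 0 ∨ i = 1 ∨ i = 2 := by omega
  all_goals simp only [bary, cross, y1, y2, y3, Fin.reduceEq, ↓reduceIte, Prod.fst_sub,
    Prod.snd_sub, simplexCoord_zero, simplexCoord_one, simplexCoord_two, toSimplex_apply]
  all_goals field_simp
  all_goals ring

lemma abs_inv_det_toSimplex : |(1 * (2 * (√3)⁻¹) - -(√3)⁻¹ * 0)⁻¹| = √3 / 2 := by
  rw [mul_zero, sub_zero, one_mul, abs_of_pos (by positivity)]
  field_simp

lemma det_toSimplex_ne_zero : 1 * (2 * (√3)⁻¹) - -(√3)⁻¹ * 0 ≠ 0 := by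
  rw [mul_zero, sub_zero, one_mul]
  positivity

lemma measurable_toSimplex : Measurable toSimplex := measurable_planeLinearMap _ _ _ _

lemma volume_preimage_toSimplex (s : Set (ℝ × ℝ)) :
    volume (toSimplex ⁻¹' s) = ENNReal.ofReal (√3 / 2) * volume s := by
  rw [toSimplex, volume_preimage_planeLinearMap det_toSimplex_ne_zero, abs_inv_det_toSimplex]

lemma setLIntegral_comp_toSimplex {g : ℝ × ℝ → ℝ≥0∞} (hg : Measurable g) {s : Set (ℝ × ℝ)}
    (hs : MeasurableSet s) :
    ∫⁻ x in toSimplex ⁻¹' s, g (toSimplex x) = ENNReal.ofReal (√3 / 2) * ∫⁻ b in s, g b := by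
  rw [toSimplex, setLIntegral_comp_planeLinearMap det_toSimplex_ne_zero hg hs,
    abs_inv_det_toSimplex]

lemma mem_T_iff (x : ℝ × ℝ) : x ∈ T ↔ ∀ j, 0 ≤ simplexCoord (toSimplex x) j := by
  simp only [T, tri, mem_ofPred_eq, bary_eq_simplexCoord]

lemma Tass_twelfth_eq : Tass (√3 / 12) = toSimplex ⁻¹' simplexCorners := by
  have h3 : 0 < √3 := by positivity
  have hcorner : ∀ (x : ℝ × ℝ) (i : Fin 3) (v : ℝ),
      1 - simplexCoord (toSimplex x) i = 2 * v / √3 →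
      (x ∈ T ∧ v ≤ √3 / 3 - √3 / 12 ↔ toSimplex x ∈ simplexCorner i) := by
    intro x i v hv
    rw [simplexCorner, mem_ofPred_eq, ← mem_T_iff, sub_eq_iff_eq_add'.1 hv]
    refine and_congr_right' ⟨fun h => ?_, fun h => ?_⟩
    · have : 2 * v / √3 ≤ 1 / 2 := by rw [div_le_iff₀ h3]; linarith
      linarith
    · have : 2 * v / √3 ≤ 1 / 2 := by linarith
      rw [div_le_iff₀ h3] at this
      linarith
  ext x
  simp only [Tass, corner1, corner2, corner3, mem_union, mem_ofPred_eq, mem_preimage]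
  rw [hcorner x 0 _ (by rw [simplexCoord_zero, toSimplex_apply]; field_simp; ring),
    hcorner x 1 _ (by rw [simplexCoord_one, toSimplex_apply]; field_simp; ring),
    hcorner x 2 _ (by rw [simplexCoord_two, toSimplex_apply]; field_simp)]
  simp [simplexCorners, Fin.exists_fin_succ, or_assoc]

lemma bary_le_bary_jmax (a b c x : ℝ × ℝ) (i : Fin 3) :
    bary a b c x i ≤ bary a b c x (jmax a b c x) := by
  unfold jmax
  split_ifs <;> fin_cases i <;> grind

lemma N_inter_Tass_twelfth (r : ℝ) (x : ℝ × ℝ) :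
    N r x ∩ Tass (√3 / 12) = toSimplex ⁻¹' (sublevel (jmax y1 y2 y3 x)
      (r * (1 - bary y1 y2 y3 x (jmax y1 y2 y3 x))) ∩ simplexCorners) := by
  rw [Tass_twelfth_eq]
  ext z
  simp only [N, prox, sublevel, mem_inter_iff, mem_preimage, mem_ofPred_eq,
    bary_eq_simplexCoord z]
  exact ⟨fun h => ⟨h.1.2, h.2⟩,
    fun h => ⟨⟨(mem_T_iff z).2 (simplexCorners_subset h.2), h.1⟩, h.2⟩⟩

lemma volume_N_inter_Tass_twelfth (r : ℝ) {x : ℝ × ℝ} {i : Fin 3}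
    (hx : toSimplex x ∈ simplexCorner i) :
    volume (N r x ∩ Tass (√3 / 12)) = ENNReal.ofReal (√3 / 2)
      * ENNReal.ofReal (sublevelArea (r * (1 - simplexCoord (toSimplex x) i))) := by
  -- `jmax` may differ from `i` where the corners overlap, but the coordinates agree there
  have hj : bary y1 y2 y3 x (jmax y1 y2 y3 x) = simplexCoord (toSimplex x) i := by
    have hle := bary_le_bary_jmax y1 y2 y3 x i
    simp only [bary_eq_simplexCoord] at hle ⊢
    exact simplexCoord_eq_of_mem_simplexCorner hx hle
  rw [N_inter_Tass_twelfth, volume_preimage_toSimplex, volume_sublevel_inter_simplexCorners, hj]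

section Measurability

variable (a b c : ℝ × ℝ)

lemma measurable_bary_apply (i : Fin 3) : Measurable fun x => bary a b c x i := by
  obtain rfl | rfl | rfl : i = 0 ∨ i = 1 ∨ i = 2 := by omega
  all_goals simp only [bary, cross, Fin.reduceEq, ↓reduceIte]; fun_prop

lemma measurable_bary_uncurry : Measurable fun p : (ℝ × ℝ) × Fin 3 => bary a b c p.1 p.2 :=
  measurable_from_prod_countable_left (measurable_bary_apply a b c)

lemma measurable_jmax : Measurable (jmax a b c) := by
  have hle : ∀ i j, MeasurableSet {x | bary a b c x i ≤ bary a b c x j} := fun i j =>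
    measurableSet_le (measurable_bary_apply a b c i) (measurable_bary_apply a b c j)
  exact Measurable.ite ((hle 1 0).inter (hle 2 0)) measurable_const
    (Measurable.ite (hle 2 1) measurable_const measurable_const)

lemma measurableSet_tri : MeasurableSet (tri a b c) := by
  simp only [tri, ofPred_forall]
  exact MeasurableSet.iInter fun i =>
    measurableSet_le measurable_const (measurable_bary_apply a b c i)

lemma measurableSet_prox_graph (r : ℝ) :
    MeasurableSet {p : (ℝ × ℝ) × (ℝ × ℝ) | p.2 ∈ prox a b c r p.1} := by
  have hj : Measurable fun p : (ℝ × ℝ) × (ℝ × ℝ) => jmax a b c p.1 :=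
    (measurable_jmax a b c).comp measurable_fst
  have hbary : ∀ {f : (ℝ × ℝ) × (ℝ × ℝ) → ℝ × ℝ}, Measurable f →
      Measurable fun p => 1 - bary a b c (f p) (jmax a b c p.1) := fun hf =>
    measurable_const.sub ((measurable_bary_uncurry a b c).comp (hf.prodMk hj))
  simp only [prox, ofPred_and]
  exact (measurable_snd (measurableSet_tri a b c)).inter
    (measurableSet_le (hbary measurable_snd) ((hbary measurable_fst).const_mul r))

end Measurability

lemma unif_prod_unif_apply (s : Set (ℝ × ℝ)) {E : Set ((ℝ × ℝ) × (ℝ × ℝ))}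
    (hE : MeasurableSet E) :
    (unif s).prod (unif s) E
      = (volume s)⁻¹ * ((volume s)⁻¹ * ∫⁻ x in s, volume (Prod.mk x ⁻¹' E ∩ s)) := by
  simp only [Measure.prod_apply hE, unif, lintegral_smul_measure, Measure.smul_apply, smul_eq_mul]
  rw [lintegral_const_mul _ (measurable_measure_prodMk_left hE)]
  simp only [Measure.restrict_apply (measurable_prodMk_left hE)]

lemma continuous_sublevelArea : Continuous sublevelArea := by
  unfold sublevelArea
  fun_prop

lemma continuous_mul_sublevelArea (r : ℝ) : Continuous fun t => t * sublevelArea (r * t) :=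
  continuous_id.mul (continuous_sublevelArea.comp (continuous_const_mul r))

lemma sublevelArea_nonneg (s : ℝ) : 0 ≤ sublevelArea s := by
  unfold sublevelArea
  positivity

lemma volume_Tass_twelfth : volume (Tass (√3 / 12)) = ENNReal.ofReal (3 * √3 / 16) := by
  have hcorners : sublevel 0 1 ∩ simplexCorners = simplexCorners :=
    inter_eq_right.2 fun b hb =>
      show 1 - simplexCoord b 0 ≤ 1 by linarith [simplexCorners_subset hb 0]
  rw [Tass_twelfth_eq, volume_preimage_toSimplex, ← hcorners,
    volume_sublevel_inter_simplexCorners, ← ENNReal.ofReal_mul (by positivity)]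
  rw [sublevelArea_of_one_le le_rfl]
  congr 1
  ring

lemma setLIntegral_Tass_twelfth (f : ℝ × ℝ → ℝ≥0∞) :
    ∫⁻ x in Tass (√3 / 12), f x = ∑ i, ∫⁻ x in toSimplex ⁻¹' simplexCorner i, f x := by
  rw [Tass_twelfth_eq, simplexCorners, preimage_iUnion,
    lintegral_iUnion₀
      (fun i => (measurable_toSimplex (measurableSet_simplexCorner i)).nullMeasurableSet)
      (fun i j hij => ?_), tsum_fintype]
  rw [Function.onFun, AEDisjoint, ← preimage_inter, volume_preimage_toSimplex,
    (subsingleton_simplexCorner_inter hij).measure_zero, mul_zero]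

lemma lintegral_volume_N_inter_Tass_twelfth (r : ℝ) :
    ∫⁻ x in Tass (√3 / 12), volume (N r x ∩ Tass (√3 / 12))
      = 3 * (ENNReal.ofReal (√3 / 2) * (ENNReal.ofReal (√3 / 2) *
          ∫⁻ t in Icc 0 (1 / 2), ENNReal.ofReal t * ENNReal.ofReal (sublevelArea (r * t)))) := by
  have hmeas : Measurable fun t => ENNReal.ofReal (sublevelArea (r * t)) :=
    ENNReal.measurable_ofReal.comp
      (continuous_sublevelArea.comp (continuous_const_mul r)).measurable
  have hcorner : ∀ i, ∫⁻ x in toSimplex ⁻¹' simplexCorner i, volume (N r x ∩ Tass (√3 / 12))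
      = ENNReal.ofReal (√3 / 2) * (ENNReal.ofReal (√3 / 2) *
          ∫⁻ t in Icc 0 (1 / 2), ENNReal.ofReal t * ENNReal.ofReal (sublevelArea (r * t))) := by
    intro i
    have hmeas_i : Measurable fun b => ENNReal.ofReal (sublevelArea (r * (1 - simplexCoord b i))) :=
      hmeas.comp (measurable_const.sub (measurable_simplexCoord i))
    rw [setLIntegral_congr_fun (measurable_toSimplex (measurableSet_simplexCorner i))
        (fun x hx => volume_N_inter_Tass_twelfth r hx),
      setLIntegral_comp_toSimplex (hmeas_i.const_mul _) (measurableSet_simplexCorner i),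
      lintegral_const_mul _ hmeas_i, setLIntegral_simplexCorner i hmeas]
  rw [setLIntegral_Tass_twelfth, Fin.sum_univ_three, hcorner, hcorner, hcorner]
  ring

lemma setLIntegral_mul_sublevelArea (r : ℝ) :
    ∫⁻ t in Icc 0 (1 / 2), ENNReal.ofReal t * ENNReal.ofReal (sublevelArea (r * t))
      = ENNReal.ofReal (∫ t in (0 : ℝ)..1 / 2, t * sublevelArea (r * t)) := by
  rw [← setLIntegral_Icc_ofReal (by norm_num) (continuous_mul_sublevelArea r)
      (fun t ht => mul_nonneg ht.1 (sublevelArea_nonneg _))]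
  exact setLIntegral_congr_fun measurableSet_Icc fun t ht => (ENNReal.ofReal_mul ht.1).symm

lemma muA_twelfth_eq (r : ℝ) :
    muA r (√3 / 12) = 64 / 3 * ∫ t in (0 : ℝ)..1 / 2, t * sublevelArea (r * t) := by
  have hI : 0 ≤ ∫ t in (0 : ℝ)..1 / 2, t * sublevelArea (r * t) :=
    intervalIntegral.integral_nonneg (by norm_num) fun t ht =>
      mul_nonneg ht.1 (sublevelArea_nonneg _)
  rw [muA, unif_prod_unif_apply (E := {p | p.2 ∈ N r p.1}) _ (measurableSet_prox_graph y1 y2 y3 r)]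
  change (_ * (_ * ∫⁻ x in _, volume (N r x ∩ _))).toReal = _
  rw [lintegral_volume_N_inter_Tass_twelfth, volume_Tass_twelfth, setLIntegral_mul_sublevelArea]
  simp only [ENNReal.toReal_mul, ENNReal.toReal_inv, ENNReal.toReal_ofReal hI,
    ENNReal.toReal_ofReal (by positivity : (0 : ℝ) ≤ 3 * √3 / 16),
    ENNReal.toReal_ofReal (by positivity : (0 : ℝ) ≤ √3 / 2), ENNReal.toReal_ofNat]
  generalize ∫ t in (0 : ℝ)..1 / 2, t * sublevelArea (r * t) = I
  field_simp
  ring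

lemma integral_cubic (a b B C D : ℝ) :
    ∫ t in a..b, (B * t + C * t ^ 2 + D * t ^ 3)
      = B / 2 * (b ^ 2 - a ^ 2) + C / 3 * (b ^ 3 - a ^ 3) + D / 4 * (b ^ 4 - a ^ 4) := by
  rw [intervalIntegral.integral_add, intervalIntegral.integral_add,
    intervalIntegral.integral_const_mul, intervalIntegral.integral_const_mul,
    intervalIntegral.integral_const_mul, integral_id, integral_pow, integral_pow]
  · ring
  all_goals exact Continuous.intervalIntegrable (by fun_prop) _ _

lemma integral_mul_sublevelArea_of_le_half {r a b : ℝ} (hr : 0 ≤ r) (hab : a ≤ b)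
    (ha : 0 ≤ a) (hb : r * b ≤ 1 / 2) :
    ∫ t in a..b, t * sublevelArea (r * t) = r ^ 2 / 8 * (b ^ 4 - a ^ 4) := by
  rw [intervalIntegral.integral_congr (g := fun t => 0 * t + 0 * t ^ 2 + r ^ 2 / 2 * t ^ 3)
    (fun t ht => ?_), integral_cubic]
  · ring
  rw [uIcc_of_le hab] at ht
  rw [sublevelArea_of_le_half (by nlinarith [ht.1]) (by nlinarith [ht.2])]
  ring

lemma integral_mul_sublevelArea_of_half_le {r a b : ℝ} (hr : 0 ≤ r) (hab : a ≤ b)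
    (ha : 1 / 2 ≤ r * a) (hb : r * b ≤ 1) :
    ∫ t in a..b, t * sublevelArea (r * t)
      = 3 / 16 * (b ^ 2 - a ^ 2) - r / 3 * (b ^ 3 - a ^ 3) + r ^ 2 / 4 * (b ^ 4 - a ^ 4) := by
  rw [intervalIntegral.integral_congr (g := fun t => 3 / 8 * t + (-r) * t ^ 2 + r ^ 2 * t ^ 3)
    (fun t ht => ?_), integral_cubic]
  · ring
  rw [uIcc_of_le hab] at ht
  rw [sublevelArea_of_half_le_of_le_one (by nlinarith [ht.1]) (by nlinarith [ht.2])]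
  ring

lemma integral_mul_sublevelArea_of_one_le {r a b : ℝ} (hr : 0 ≤ r) (hab : a ≤ b)
    (ha : 1 ≤ r * a) :
    ∫ t in a..b, t * sublevelArea (r * t) = 3 / 16 * (b ^ 2 - a ^ 2) := by
  rw [intervalIntegral.integral_congr (g := fun t => 3 / 8 * t + 0 * t ^ 2 + 0 * t ^ 3)
    (fun t ht => ?_), integral_cubic]
  · ring
  rw [uIcc_of_le hab] at ht
  rw [sublevelArea_of_one_le (by nlinarith [ht.1])]
  ring

lemma integral_mul_sublevelArea_of_lt_two {r : ℝ} (h1 : 1 ≤ r) (h2 : r < 2) :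
    ∫ t in (0 : ℝ)..1 / 2, t * sublevelArea (r * t)
      = (6 * r ^ 4 - 16 * r ^ 3 + 18 * r ^ 2 - 5) / (384 * r ^ 2) := by
  have hr : 0 < r := by linarith
  have hm : r * (1 / (2 * r)) = 1 / 2 := by field_simp
  have hint := fun a b => (continuous_mul_sublevelArea r).intervalIntegrable (μ := volume) a b
  rw [← intervalIntegral.integral_add_adjacent_intervals (b := 1 / (2 * r)) (hint _ _) (hint _ _),
    integral_mul_sublevelArea_of_le_half hr.le (by positivity) le_rfl hm.le,
    integral_mul_sublevelArea_of_half_le hr.le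
      (by rw [div_le_div_iff₀ (by positivity) (by norm_num)]; linarith) hm.ge (by linarith)]
  field_simp
  ring

lemma integral_mul_sublevelArea_of_two_le {r : ℝ} (h : 2 ≤ r) :
    ∫ t in (0 : ℝ)..1 / 2, t * sublevelArea (r * t) = (18 * r ^ 2 - 37) / (384 * r ^ 2) := by
  have hr : 0 < r := by linarith
  have hm : r * (1 / (2 * r)) = 1 / 2 := by field_simp
  have hM : r * (1 / r) = 1 := by field_simp
  have hint := fun a b => (continuous_mul_sublevelArea r).intervalIntegrable (μ := volume) a b
  rw [← intervalIntegral.integral_add_adjacent_intervals (b := 1 / r) (hint _ _) (hint _ _),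
    ← intervalIntegral.integral_add_adjacent_intervals (b := 1 / (2 * r)) (hint _ _) (hint _ _),
    integral_mul_sublevelArea_of_le_half hr.le (by positivity) le_rfl hm.le,
    integral_mul_sublevelArea_of_half_le hr.le
      (by rw [div_le_div_iff₀ (by positivity) hr]; linarith) hm.ge hM.le,
    integral_mul_sublevelArea_of_one_le hr.le
      (by rw [div_le_div_iff₀ hr (by norm_num)]; linarith) hM.ge]
  field_simp
  ring

end ArcProbability

/-- The arc probability under association with `ε = √3/12`, piecewise in `r`. -/
theorem arc_probability_association_twelfth (r : ℝ) :
    (r ∈ Set.Ico (1 : ℝ) 2 →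
      muA r (Real.sqrt 3 / 12) =
        (6 * r ^ 4 - 16 * r ^ 3 + 18 * r ^ 2 - 5) / (18 * r ^ 2)) ∧
    (r ∈ Set.Ici (2 : ℝ) →
      muA r (Real.sqrt 3 / 12) = 1 - 37 / 18 * (r ^ 2)⁻¹) := by
  refine ⟨fun ⟨h1, h2⟩ => ?_, fun h => ?_⟩
  · have hr : r ≠ 0 := by positivity
    rw [ArcProbability.muA_twelfth_eq, ArcProbability.integral_mul_sublevelArea_of_lt_two h1 h2]
    field_simp
    ring
  · have hr : r ≠ 0 := by linarith [mem_Ici.1 h]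
    rw [ArcProbability.muA_twelfth_eq, ArcProbability.integral_mul_sublevelArea_of_two_le h]
    field_simp
    ring
end
end
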